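/- Existence and uniqueness of the L-projection on a convex closed set: Let p ∈ P(X) have full support (p(x) > 0 for all x ∈ X), and let Q ⊆ P(X) be nonempty, convex, and closed, with L(Q‖p) > −∞. Then there exists exactly one q̂ ∈ Q with L(q̂‖p) = L(Q‖p); that is, the L-projection of p on Q exists and is unique. -/

import Mathlib

open scoped BigOperators Classical
open Filter Topology

noncomputable section

def pmfSet (X : Type*) [Fintype X] : Set (X → ℝ) :=
  {p | (∀ x, 0 ≤ p x) ∧ ∑ x, p x = 1}

def Rn (X : Type*) [Fintype X] (n : ℕ) : Set (X → ℝ) :=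
  {q | q ∈ pmfSet X ∧ ∀ x, ∃ k : ℕ, q x = (k : ℝ) / (n : ℝ)}

def ratPMF (X : Type*) [Fintype X] : Set (X → ℝ) :=
  {q | q ∈ pmfSet X ∧ ∀ x, ∃ r : ℚ, q x = (r : ℝ)}

def Ldiv {X : Type*} [Fintype X] (q p : X → ℝ) : EReal :=
  ∑ x, if p x = 0 then (0 : EReal)
    else if q x = 0 then (⊥ : EReal)
    else (↑(p x * Real.log (q x)) : EReal)

def LSup {X : Type*} [Fintype X] (Q : Set (X → ℝ)) (p : X → ℝ) : EReal :=
  ⨆ q ∈ Q, Ldiv q p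

def Idiv {X : Type*} [Fintype X] (p q : X → ℝ) : EReal :=
  ∑ x, if p x = 0 then (0 : EReal)
    else if q x = 0 then (⊤ : EReal)
    else (↑(p x * Real.log (p x / q x)) : EReal)

def typeProb {X : Type*} [Fintype X] (n : ℕ) (ν q : X → ℝ) : ℝ :=
  ∏ x, q x ^ ((n : ℝ) * ν x)

def post {X : Type*} [Fintype X] (n : ℕ) (ν : X → ℝ) (Q : Set (X → ℝ)) : ℝ :=
  (∑' q : ↥(Q ∩ Rn X n), typeProb n ν ↑q) / (∑' q : ↥(Rn X n), typeProb n ν ↑q)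

def postGen {X : Type*} [Fintype X] (w : (X → ℝ) → ℝ) (n : ℕ) (ν : X → ℝ)
    (Q : Set (X → ℝ)) : ℝ :=
  (∑' q : ↥(Q ∩ Rn X n), w ↑q * typeProb n ν ↑q) /
  (∑' q : ↥(Rn X n), w ↑q * typeProb n ν ↑q)

def tv {X : Type*} [Fintype X] (p q : X → ℝ) : ℝ := (1 / 2) * ∑ x, |p x - q x|

def tvBall {X : Type*} [Fintype X] (q : X → ℝ) (ε : ℝ) : Set (X → ℝ) :=
  {p | p ∈ pmfSet X ∧ tv p q ≤ ε}

def elog (x : ℝ) : EReal := if x ≤ 0 then (⊥ : EReal) else (↑(Real.log x) : EReal)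

def linFam {X : Type*} [Fintype X] {k : ℕ} (u : Fin k → X → ℝ) (a : Fin k → ℝ) :
    Set (X → ℝ) :=
  {q | q ∈ pmfSet X ∧ ∀ j, ∑ x, q x * u j x = a j}

def lambdaN {X : Type*} [Fintype X] (w : (X → ℝ) → ℝ) (n : ℕ) (ν : X → ℝ)
    (C : Set (X → ℝ)) : EReal :=
  ⨆ q ∈ C ∩ {q | q ∈ Rn X n ∧ 0 < w q},
    (Ldiv q ν + (↑((1 : ℝ) / n * Real.log (w q)) : EReal))

def priorN {X : Type*} [Fintype X] (c : ℕ → (X → ℝ) → (X → ℝ)) (pr : (X → ℝ) → ℝ)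
    (n : ℕ) (qn : X → ℝ) : ℝ :=
  ∑' q : ↥{q | q ∈ ratPMF X ∧ c n q = qn}, pr ↑q

/-! On probability vectors of full support `Ldiv q p` is the real number `∑ p x * log (q x)`,
and it is `⊥` otherwise. Since `L(Q‖p) > ⊥`, some `q₀ ∈ Q` has a finite value `c`; every `q` with
value at least `c` satisfies `q x ≥ exp (c / p x)`, so the supremum may be taken over a compact
part of `Q` on which the objective is continuous, and it is attained. Because `p` has full
support, the objective is strictly concave on the positive orthant, so the maximizer in the convex
set `Q` is unique. -/

lemma EReal.coe_finset_sum {ι : Type*} (s : Finset ι) (f : ι → ℝ) :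
    ((∑ i ∈ s, f i : ℝ) : EReal) = ∑ i ∈ s, (f i : EReal) :=
  map_sum (⟨⟨Real.toEReal, EReal.coe_zero⟩, EReal.coe_add⟩ : ℝ →+ EReal) f s

lemma convex_setOf_forall_pos {ι : Type*} : Convex ℝ {q : ι → ℝ | ∀ i, 0 < q i} :=
  fun _ hq _ hq' _ _ ha hb hab i => convex_Ioi (0 : ℝ) (hq i) (hq' i) ha hb hab

section LProjection

variable {X : Type*} [Fintype X]

lemma single_le_one_of_mem_pmfSet {q : X → ℝ} (hq : q ∈ pmfSet X) (x : X) : q x ≤ 1 :=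
  hq.2 ▸ Finset.single_le_sum (fun y _ => hq.1 y) (Finset.mem_univ x)

lemma isCompact_pmfSet : IsCompact (pmfSet X) := isCompact_stdSimplex ℝ X

/-- Equals `Ldiv q p` when `p` and `q` have full support; elsewhere `Real.log 0 = 0` intervenes. -/
def logLik (p q : X → ℝ) : ℝ := ∑ x, p x * Real.log (q x)

lemma Ldiv_eq_logLik {p q : X → ℝ} (hp : ∀ x, p x ≠ 0) (hq : ∀ x, q x ≠ 0) :
    Ldiv q p = logLik p q := by
  rw [Ldiv, logLik, EReal.coe_finset_sum]
  exact Finset.sum_congr rfl fun x _ => by rw [if_neg (hp x), if_neg (hq x)]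

lemma Ldiv_eq_bot {p q : X → ℝ} (hp : ∀ x, p x ≠ 0) {x₀ : X} (hx₀ : q x₀ = 0) :
    Ldiv q p = ⊥ := by
  rw [Ldiv, ← Finset.add_sum_erase _ _ (Finset.mem_univ x₀), if_neg (hp x₀), if_pos hx₀,
    EReal.bot_add]

lemma pos_of_Ldiv_ne_bot {p q : X → ℝ} (hp : ∀ x, p x ≠ 0) (hq : ∀ x, 0 ≤ q x)
    (h : Ldiv q p ≠ ⊥) (x : X) : 0 < q x :=
  (hq x).lt_of_ne fun hx => h (Ldiv_eq_bot hp hx.symm)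

lemma continuousOn_logLik (p : X → ℝ) : ContinuousOn (logLik p) {q | ∀ x, 0 < q x} := by
  unfold logLik
  refine continuousOn_finsetSum _ fun x _ => ContinuousOn.mul continuousOn_const ?_
  exact (continuous_apply x).continuousOn.log fun q hq => (hq x).ne'

lemma strictConcaveOn_logLik {p : X → ℝ} (hp : ∀ x, 0 < p x) :
    StrictConcaveOn ℝ {q | ∀ x, 0 < q x} (logLik p) := by
  refine ⟨convex_setOf_forall_pos, fun q hq q' hq' hne a b ha hb hab => ?_⟩
  obtain ⟨x₀, hx₀⟩ := Function.ne_iff.1 hne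
  have hsplit : ∀ x, a * (p x * Real.log (q x)) + b * (p x * Real.log (q' x)) =
      p x * (a • Real.log (q x) + b • Real.log (q' x)) := fun x => by
    simp only [smul_eq_mul]; ring
  simp only [logLik, smul_eq_mul, Finset.mul_sum, ← Finset.sum_add_distrib, hsplit]
  refine Finset.sum_lt_sum (fun x _ => ?_) ⟨x₀, Finset.mem_univ x₀, ?_⟩
  · exact mul_le_mul_of_nonneg_left (strictConcaveOn_log_Ioi.concaveOn.2 (hq x) (hq' x)
      ha.le hb.le hab) (hp x).le
  · exact mul_lt_mul_of_pos_left (strictConcaveOn_log_Ioi.2 (hq x₀) (hq' x₀) hx₀ ha hb hab)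
      (hp x₀)

/-- All terms of `logLik p q` are nonpositive, so each single one is at least `c`. -/
lemma exp_div_le_of_le_logLik {p q : X → ℝ} (hp : ∀ x, 0 < p x) (hq : q ∈ pmfSet X)
    (hqpos : ∀ x, 0 < q x) {c : ℝ} (hc : c ≤ logLik p q) (x : X) :
    Real.exp (c / p x) ≤ q x := by
  have hrest : ∑ y ∈ Finset.univ.erase x, p y * Real.log (q y) ≤ 0 :=
    Finset.sum_nonpos fun y _ => mul_nonpos_of_nonneg_of_nonpos (hp y).le
      (Real.log_nonpos (hq.1 y) (single_le_one_of_mem_pmfSet hq y))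
  have hterm : c ≤ p x * Real.log (q x) := by
    rw [logLik, ← Finset.add_sum_erase _ _ (Finset.mem_univ x)] at hc
    linarith
  rw [← Real.le_log_iff_exp_le (hqpos x), div_le_iff₀' (hp x)]
  exact hterm

lemma exists_isMaxOn_logLik {p : X → ℝ} (hp : ∀ x, 0 < p x) {Q : Set (X → ℝ)}
    (hQsub : Q ⊆ pmfSet X) (hQ : IsClosed Q) {q₀ : X → ℝ} (hq₀ : q₀ ∈ Q)
    (hq₀pos : ∀ x, 0 < q₀ x) :
    ∃ q ∈ Q ∩ {q | ∀ x, 0 < q x}, IsMaxOn (logLik p) (Q ∩ {q | ∀ x, 0 < q x}) q := by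
  set c := logLik p q₀
  set K := Q ∩ {q | ∀ x, Real.exp (c / p x) ≤ q x}
  have hKpos : K ⊆ {q | ∀ x, 0 < q x} := fun q hq x => (Real.exp_pos _).trans_le (hq.2 x)
  have hKclosed : IsClosed K := by
    refine hQ.inter ?_
    rw [Set.ofPred_forall]
    exact isClosed_iInter fun x => isClosed_le continuous_const (continuous_apply x)
  have hK : IsCompact K :=
    isCompact_pmfSet.of_isClosed_subset hKclosed (Set.inter_subset_left.trans hQsub)
  have hq₀K : q₀ ∈ K := ⟨hq₀, exp_div_le_of_le_logLik hp (hQsub hq₀) hq₀pos le_rfl⟩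
  obtain ⟨q, hqK, hmax⟩ := hK.exists_isMaxOn ⟨q₀, hq₀K⟩ ((continuousOn_logLik p).mono hKpos)
  refine ⟨q, ⟨hqK.1, hKpos hqK⟩, isMaxOn_iff.2 fun q' hq' => ?_⟩
  by_cases hc : c ≤ logLik p q'
  · exact hmax ⟨hq'.1, exp_div_le_of_le_logLik hp (hQsub hq'.1) hq'.2 hc⟩
  · exact (not_le.1 hc).le.trans (hmax hq₀K)

lemma LSup_eq_logLik_of_isMaxOn {p : X → ℝ} (hp : ∀ x, p x ≠ 0) {Q : Set (X → ℝ)}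
    (hQsub : Q ⊆ pmfSet X) {q : X → ℝ} (hq : q ∈ Q ∩ {q | ∀ x, 0 < q x})
    (hmax : IsMaxOn (logLik p) (Q ∩ {q | ∀ x, 0 < q x}) q) :
    LSup Q p = logLik p q := by
  refine le_antisymm (iSup₂_le fun q' hq' => ?_) ?_
  · by_cases hpos : ∀ x, 0 < q' x
    · rw [Ldiv_eq_logLik hp fun x => (hpos x).ne', EReal.coe_le_coe_iff]
      exact hmax ⟨hq', hpos⟩
    · obtain ⟨x, hx⟩ := not_forall.1 hpos
      rw [Ldiv_eq_bot hp (le_antisymm (not_lt.1 hx) ((hQsub hq').1 x))]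
      exact bot_le
  · rw [← Ldiv_eq_logLik hp fun x => (hq.2 x).ne']
    exact le_iSup₂_of_le q hq.1 le_rfl

end LProjection

theorem Lprojection_exists_unique_general {X : Type*} [Fintype X]
    (p : X → ℝ) (hpfull : ∀ x, 0 < p x)
    (Q : Set (X → ℝ)) (hQsub : Q ⊆ pmfSet X)
    (hQconv : Convex ℝ Q) (hQclosed : IsClosed {r : ↥(pmfSet X) | ↑r ∈ Q})
    (hL : ⊥ < LSup Q p) :
    ∃! qhat, qhat ∈ Q ∧ Ldiv qhat p = LSup Q p := by
  have hpne : ∀ x, p x ≠ 0 := fun x => (hpfull x).ne'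
  have hQ : IsClosed Q := by
    change IsClosed (Subtype.val ⁻¹' Q) at hQclosed
    have h := hQclosed.trans isCompact_pmfSet.isClosed
    rwa [Subtype.image_preimage_coe, Set.inter_eq_right.2 hQsub] at h
  set S := Q ∩ {q | ∀ x, 0 < q x}
  obtain ⟨q₀, hq₀, hq₀L⟩ := lt_biSup_iff.1 hL
  obtain ⟨qhat, hqhat, hmax⟩ := exists_isMaxOn_logLik hpfull hQsub hQ hq₀
    (pos_of_Ldiv_ne_bot hpne (hQsub hq₀).1 hq₀L.ne')
  have hLSup := LSup_eq_logLik_of_isMaxOn hpne hQsub hqhat hmax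
  refine ⟨qhat, ⟨hqhat.1, by rw [hLSup, Ldiv_eq_logLik hpne fun x => (hqhat.2 x).ne']⟩, ?_⟩
  rintro q ⟨hq, hqL⟩
  rw [hLSup] at hqL
  have hqS : q ∈ S := ⟨hq, pos_of_Ldiv_ne_bot hpne (hQsub hq).1 (hqL ▸ EReal.coe_ne_bot _)⟩
  rw [Ldiv_eq_logLik hpne fun x => (hqS.2 x).ne', EReal.coe_eq_coe_iff] at hqL
  have hqmax : IsMaxOn (logLik p) S q := isMaxOn_iff.2 fun y hy => hqL ▸ hmax hy
  exact ((strictConcaveOn_logLik hpfull).subset Set.inter_subset_right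
    (hQconv.inter convex_setOf_forall_pos)).eq_of_isMaxOn hqmax hmax hqS hqhat

/-- Existence and uniqueness of the L-projection on a convex closed set. -/
theorem Lprojection_exists_unique {X : Type*} [Fintype X] [Nonempty X]
    (p : X → ℝ) (hp : p ∈ pmfSet X) (hpfull : ∀ x, 0 < p x)
    (Q : Set (X → ℝ)) (hQsub : Q ⊆ pmfSet X) (hQne : Q.Nonempty)
    (hQconv : Convex ℝ Q) (hQclosed : IsClosed {r : ↥(pmfSet X) | ↑r ∈ Q})
    (hL : ⊥ < LSup Q p) :
    ∃! qhat, qhat ∈ Q ∧ Ldiv qhat p = LSup Q p :=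
  Lprojection_exists_unique_general p hpfull Q hQsub hQconv hQclosed hL
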